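/- In a response-function model for noncompliance with missingness (Figure 2c–2e): latent U with counterfactual compliance X(r), potential outcomes Y(x), and observation indicator O (an arbitrary function of U, X, Y, R), with R randomized (independent of U). Define θ = P(Y(1)=1) − P(Y(0)=1) and p_{xy1.r} = P(X(r)=x, Y(X(r))=y, O=1 | R=r). Then θ ≥ p_{001.r} + p_{111.r'} − 1 for any r, r' ∈ {0,1}. -/

import Mathlib

open Finset

open scoped Classical in
/-- Probability of event `A` under (finitely supported) weights `w`. -/
noncomputable def pr {Ω : Type*} [Fintype Ω] (w : Ω → ℝ) (A : Ω → Prop) : ℝ :=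
  ∑ ω ∈ Finset.univ.filter A, w ω

/-- Conditional probability of `A` given `B`. -/
noncomputable def cpr {Ω : Type*} [Fintype Ω] (w : Ω → ℝ) (A B : Ω → Prop) : ℝ :=
  pr w (fun ω => A ω ∧ B ω) / pr w B

open scoped Classical in
lemma pr_mono {Ω : Type*} [Fintype Ω] (w : Ω → ℝ) (hw : ∀ u, 0 ≤ w u)
    (A B : Ω → Prop) (h : ∀ u, A u → B u) : pr w A ≤ pr w B := by
  apply Finset.sum_le_sum_of_subset_of_nonneg
  · intro u hu
    simp only [Finset.mem_filter, Finset.mem_univ, true_and] at *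
    exact h u hu
  · intro u _ _; exact hw u

open scoped Classical in
lemma pr_compl {Ω : Type*} [Fintype Ω] (w : Ω → ℝ) (hsum : ∑ u, w u = 1)
    (A : Ω → Prop) : pr w (fun u => ¬ A u) = 1 - pr w A := by
  unfold pr
  have h := Finset.sum_filter_add_sum_filter_not Finset.univ A w
  rw [← hsum, ← h]
  ring_nf
  congr!

/-- noncompliance response-function model (Figures 2c–2e): latent `U`
independent of the randomized assignment `R`, counterfactual compliance `fX u r`,
potential outcomes `fY u x`, observation status `fO u r` (an arbitrary function of
`U` and `R`, hence of `U, X, Y, R`).  For all `r, r'`: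
`θ ≥ p_{001.r} + p_{111.r'} − 1`, where `p x y r = P(X = x, Y = y, O = 1 ∣ R = r)`. -/
theorem fig2cde_lower {U : Type*} [Fintype U]
    (q : U → ℝ) (hq : ∀ u, 0 ≤ q u) (hqsum : ∑ u, q u = 1)
    (fX : U → Fin 2 → Fin 2) (fY : U → Fin 2 → Fin 2) (fO : U → Fin 2 → Fin 2)
    (θ : ℝ)
    (hθ : θ = pr q (fun u => fY u 1 = 1) - pr q (fun u => fY u 0 = 1))
    (p : Fin 2 → Fin 2 → Fin 2 → ℝ)
    (hp : ∀ x y r, p x y r =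
      pr q (fun u => fX u r = x ∧ fY u (fX u r) = y ∧ fO u r = 1)) :
    ∀ r r' : Fin 2, p 0 0 r + p 1 1 r' - 1 ≤ θ := by
  intro r r'
  have h1 : p 1 1 r' ≤ pr q (fun u => fY u 1 = 1) := by
    rw [hp]
    apply pr_mono q hq
    rintro u ⟨hx, hy, -⟩
    rwa [hx] at hy
  have h2 : p 0 0 r ≤ pr q (fun u => ¬ fY u 0 = 1) := by
    rw [hp]
    apply pr_mono q hq
    rintro u ⟨hx, hy, -⟩
    rw [hx] at hy
    rw [hy]; decide
  rw [pr_compl q hqsum] at h2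
  rw [hθ]
  linarith
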